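/- The pair of statistics (das, mix) is equidistributed with (des, inv) on S_n: for all natural numbers a and b, the number of permutations π ∈ S_n with das π = a and mix π = b equals the number of permutations π ∈ S_n with des π = a and inv π = b. -/

import Mathlib

namespace PaperStats

/-- `des w` is the number of descents of the word `w` (0-indexed positions `i`
with `w(i) > w(i+1)`). -/
def des (w : List ℕ) : ℕ :=
  ((Finset.range (w.length - 1)).filter fun i => w.getD (i + 1) 0 < w.getD i 0).card

/-- `inv w` is the number of inversions of the word `w`: pairs of positions
`i < j` with `w(i) > w(j)`. -/
def inv (w : List ℕ) : ℕ :=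
  ((Finset.range w.length ×ˢ Finset.range w.length).filter
    fun p => p.1 < p.2 ∧ w.getD p.2 0 < w.getD p.1 0).card

/-- An inversion `(i,j)` of `w` is admissible if either `w(j) < w(j+1)`
(`j` is not the last position and is followed by an ascent), or there is a
position `k` strictly between `i` and `j` with `w(j) > w(k)`. -/
def IsAdmissible (w : List ℕ) (i j : ℕ) : Prop :=
  (j + 1 < w.length ∧ w.getD j 0 < w.getD (j + 1) 0) ∨
    ∃ k, i < k ∧ k < j ∧ w.getD k 0 < w.getD j 0

instance (w : List ℕ) (i j : ℕ) : Decidable (IsAdmissible w i j) :=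
  decidable_of_iff ((j + 1 < w.length ∧ w.getD j 0 < w.getD (j + 1) 0) ∨
      ∃ k ∈ Finset.Ioo i j, w.getD k 0 < w.getD j 0) (by
    unfold IsAdmissible
    simp only [Finset.mem_Ioo, and_assoc])

/-- `ai w` is the number of admissible inversions of `w`. -/
def ai (w : List ℕ) : ℕ :=
  ((Finset.range w.length ×ˢ Finset.range w.length).filter
    fun p => p.1 < p.2 ∧ w.getD p.2 0 < w.getD p.1 0 ∧ IsAdmissible w p.1 p.2).card

/-- `aid w = ai w + des w`. -/
def aid (w : List ℕ) : ℕ := ai w + des w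

/-- The statistic `aix`, defined recursively: `aix ∅ = 0`; writing a nonempty
word as `π = α m β`, where `m` is the smallest letter and `α` is the maximal
prefix not containing `m`, one has `aix π = 1 + aix β` if `α = ∅`,
`aix π = 0` if `β = ∅` (and `α ≠ ∅`), and `aix π = aix α` otherwise. -/
def aix : List ℕ → ℕ
  | [] => 0
  | x :: xs =>
    if (x :: xs).takeWhile (fun a => decide (a ≠ xs.foldr min x)) = [] then
      1 + aix (((x :: xs).dropWhile (fun a => decide (a ≠ xs.foldr min x))).tail)
    else if ((x :: xs).dropWhile (fun a => decide (a ≠ xs.foldr min x))).tail = [] then 0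
    else aix ((x :: xs).takeWhile (fun a => decide (a ≠ xs.foldr min x)))
termination_by w => w.length
decreasing_by
  all_goals simp only [List.foldr_attach] at *
  · have h1 := (List.dropWhile_sublist (l := x :: xs) (fun a => decide (a ≠ xs.foldr min x))).length_le
    have h2 := List.length_tail (l := (x :: xs).dropWhile (fun a => decide (a ≠ xs.foldr min x)))
    simp only [List.length_cons] at *
    omega
  · rename_i hα hβ
    have h0 : ((x :: xs).takeWhile (fun a => decide (a ≠ xs.foldr min x))) ++
        ((x :: xs).dropWhile (fun a => decide (a ≠ xs.foldr min x))) = x :: xs :=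
      List.takeWhile_append_dropWhile ..
    have h1 : ((x :: xs).dropWhile (fun a => decide (a ≠ xs.foldr min x))) ≠ [] := by
      intro h
      apply hβ
      rw [h]
      rfl
    have h2 := congrArg List.length h0
    simp only [List.length_append, List.length_cons] at h2
    have h3 : 0 < ((x :: xs).dropWhile (fun a => decide (a ≠ xs.foldr min x))).length :=
      List.length_pos_iff.mpr h1
    simp only [List.length_cons]
    omega

/-- The map `f(k,τ)`: with `m` the smallest letter of `τ` together with `k`
(`k` not occurring in `τ`), and `τ = α m β` with `α` the maximal prefix of `τ`
avoiding `m`: `f(k,∅) = k`; `f(k,τ) = kτ` if `k = m`; and for `k > m`,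
`f(k,τ) = f(k,β) m` if `α = ∅`, `f(k,τ) = k m α` if `β = ∅`, and
`f(k,τ) = f(k,α) m β` otherwise. -/
def fkt (k : ℕ) : List ℕ → List ℕ
  | [] => [k]
  | x :: xs =>
    if k < xs.foldr min x then k :: x :: xs
    else if (x :: xs).takeWhile (fun a => decide (a ≠ xs.foldr min x)) = [] then
      fkt k (((x :: xs).dropWhile (fun a => decide (a ≠ xs.foldr min x))).tail) ++
        [xs.foldr min x]
    else if ((x :: xs).dropWhile (fun a => decide (a ≠ xs.foldr min x))).tail = [] then
      k :: xs.foldr min x :: ((x :: xs).takeWhile (fun a => decide (a ≠ xs.foldr min x)))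
    else
      fkt k ((x :: xs).takeWhile (fun a => decide (a ≠ xs.foldr min x))) ++
        xs.foldr min x :: ((x :: xs).dropWhile (fun a => decide (a ≠ xs.foldr min x))).tail
termination_by w => w.length
decreasing_by
  all_goals simp only [List.foldr_attach] at *
  · have h1 := (List.dropWhile_sublist (l := x :: xs) (fun a => decide (a ≠ xs.foldr min x))).length_le
    have h2 := List.length_tail (l := (x :: xs).dropWhile (fun a => decide (a ≠ xs.foldr min x)))
    simp only [List.length_cons] at *
    omega
  · rename_i hk hα hβ
    have h0 : ((x :: xs).takeWhile (fun a => decide (a ≠ xs.foldr min x))) ++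
        ((x :: xs).dropWhile (fun a => decide (a ≠ xs.foldr min x))) = x :: xs :=
      List.takeWhile_append_dropWhile ..
    have h1 : ((x :: xs).dropWhile (fun a => decide (a ≠ xs.foldr min x))) ≠ [] := by
      intro h
      apply hβ
      rw [h]
      rfl
    have h2 := congrArg List.length h0
    simp only [List.length_append, List.length_cons] at h2
    have h3 : 0 < ((x :: xs).dropWhile (fun a => decide (a ≠ xs.foldr min x))).length :=
      List.length_pos_iff.mpr h1
    simp only [List.length_cons]
    omega

/-- `ini w` is the first letter of `w`. -/
def ini (w : List ℕ) : ℕ := w.headD 0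

/-- The word of a permutation `π ∈ S_n`, namely `π(1) π(2) … π(n)`
(with values in `{1, …, n}`). -/
def permList {n : ℕ} (π : Equiv.Perm (Fin n)) : List ℕ :=
  List.ofFn fun i => (π i : ℕ) + 1

/-- The bijection `φ`: `φ(π) = f(π(1), f(π(2), ⋯ f(π(n), ∅) ⋯ ))`. -/
def phiW (w : List ℕ) : List ℕ := w.foldr fkt []

/-- Helper: `decRun l` splits `l` into its maximal weakly decreasing prefix
and the rest. -/
def decRun : List ℕ → List ℕ × List ℕ
  | [] => ([], [])
  | [x] => ([x], [])
  | x :: y :: rest =>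
    if y ≤ x then ((x :: (decRun (y :: rest)).1), (decRun (y :: rest)).2)
    else ([x], y :: rest)

theorem decRun_append : ∀ l : List ℕ, (decRun l).1 ++ (decRun l).2 = l
  | [] => rfl
  | [x] => rfl
  | x :: y :: rest => by
    rw [decRun]
    split
    · simpa using decRun_append (y :: rest)
    · rfl

/-- Helper computing the hook factorization of a word from its reversal: the
rightmost hook of the word starts at its rightmost descent top, i.e. it is
obtained by extending the maximal weakly decreasing prefix of the reversed word
by one more letter; the process is repeated on what remains, and when no
letters usable for a hook remain the word left over is the increasing part
`π₀`. The result is `(π₀, [π₁, …, π_k])`. -/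
def hookRev (r : List ℕ) : List ℕ × List (List ℕ) :=
  match h : (decRun r).2 with
  | [] => (r.reverse, [])
  | z :: rest =>
    ((hookRev rest).1, (hookRev rest).2 ++ [z :: (decRun r).1.reverse])
termination_by r.length
decreasing_by
  have h2 := congrArg List.length (decRun_append r)
  rw [h] at h2
  simp only [List.length_append, List.length_cons] at h2
  omega

/-- The hook factorization `(π₀, [π₁, …, π_k])` of a word
`w = π₀ π₁ ⋯ π_k`, where `π₀` is increasing and each `π_i`, `i ≥ 1`, is a
hook. -/
def hookSplit (w : List ℕ) : List ℕ × List (List ℕ) := hookRev w.reverse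

/-- `pix w` is the length of the initial increasing factor `π₀` in the hook
factorization of `w`. -/
def pix (w : List ℕ) : ℕ := (hookSplit w).1.length

/-- `lec w` is the sum of the numbers of inversions of the hooks in the hook
factorization of `w`. -/
def lec (w : List ℕ) : ℕ := ((hookSplit w).2.map inv).sum

/-- A word `w(1) … w(r)` with `r ≥ 2` is a hook if
`w(1) > w(2) ≤ w(3) ≤ ⋯ ≤ w(r)`. -/
def IsHook (w : List ℕ) : Prop :=
  ∃ a b rest, w = a :: b :: rest ∧ b < a ∧ List.Chain' (· ≤ ·) (b :: rest)

/-- `w(i)` is a left-to-right maximum of `w` if `w(k) < w(i)` for all `k < i`. -/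
def IsLRMax (w : List ℕ) (i : ℕ) : Prop := ∀ k < i, w.getD k 0 < w.getD i 0

instance (w : List ℕ) (i : ℕ) : Decidable (IsLRMax w i) := by
  unfold IsLRMax; infer_instance

/-- `mix w` counts the pairs of positions `i < j` such that either
`w(i) > w(j)` and `w(i)` is a left-to-right maximum, or `w(i) < w(j)` and
there is `k < i` with `w(k) > w(j)`. -/
def mix (w : List ℕ) : ℕ :=
  ((Finset.range w.length ×ˢ Finset.range w.length).filter fun p =>
    p.1 < p.2 ∧ ((w.getD p.2 0 < w.getD p.1 0 ∧ IsLRMax w p.1) ∨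
      (w.getD p.1 0 < w.getD p.2 0 ∧ ∃ k ∈ Finset.range p.1, w.getD p.2 0 < w.getD k 0))).card

/-- `das w` counts the positions `i` such that either `w(i) > w(i+1)` and
`w(i)` is a left-to-right maximum, or `w(i) < w(i+1)` and there is `k < i`
with `w(k) > w(i+1)`. -/
def das (w : List ℕ) : ℕ :=
  ((Finset.range (w.length - 1)).filter fun i =>
    (w.getD (i + 1) 0 < w.getD i 0 ∧ IsLRMax w i) ∨
      (w.getD i 0 < w.getD (i + 1) 0 ∧ ∃ k ∈ Finset.range i, w.getD (i + 1) 0 < w.getD k 0)).card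

/-- The values of the left-to-right maxima of a word, listed in increasing
order (which is also their order of occurrence). -/
def lrMaxima : List ℕ → List ℕ
  | [] => []
  | x :: xs => x :: lrMaxima (xs.filter fun a => decide (x < a))
termination_by l => l.length
decreasing_by
  have := xs.length_filter_le (fun a => decide (x < a))
  simp only [List.length_cons, List.length_unattach] at *
  exact Nat.lt_succ_of_le ((List.length_filter_le _ _).trans_eq List.length_attach)

/-- `Bset w m` is the list of entries of `w` that are smaller than `m` and lie
to the right of (the first occurrence of) `m` in `w`. -/
def Bset (w : List ℕ) (m : ℕ) : List ℕ :=
  ((w.dropWhile fun a => decide (a ≠ m)).tail).filter fun a => decide (a < m)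

/-- Helper for `psiS`: replace the letters satisfying `P`, in order, by the
letters of the first list. -/
def replaceSub (P : ℕ → Bool) : List ℕ → List ℕ → List ℕ
  | _, [] => []
  | rs, x :: xs =>
    if P x then rs.headD x :: replaceSub P rs.tail xs else x :: replaceSub P rs xs

/-- `psiS S w` is `ψ_S(w)`: the result of reversing, in place, the subword of
`w` consisting of the entries belonging to `S`. -/
def psiS (S : List ℕ) (w : List ℕ) : List ℕ :=
  replaceSub (fun a => decide (a ∈ S)) ((w.filter fun a => decide (a ∈ S)).reverse) w

/-- Helper applying the alternating composition
`ψ_{B₁} ∘ ψ_{B₂ ∩ B₁} ∘ ψ_{B₂} ∘ ⋯ ∘ ψ_{B_{k-1}} ∘ ψ_{B_k ∩ B_{k-1}} ∘ ψ_{B_k}`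
to `w`, given the list `[B_k, B_{k-1}, …, B₁]`. -/
def psiChain : List (List ℕ) → List ℕ → List ℕ
  | [], w => w
  | [B], w => psiS B w
  | B :: B' :: rest, w => psiChain (B' :: rest) (psiS (B.inter B') (psiS B w))

/-- The Brändén–Claesson bijection `ψ`. -/
def psi (w : List ℕ) : List ℕ :=
  psiChain (((lrMaxima w).map (Bset w)).reverse) w

/-!
Both pairs of statistics are read off codes with values in the `n!` Lehmer codes, the words `c`
with `c i < n - i`. The Lehmer code of `π` has sum `inv π`, and its descents are those of `π`.
The second code records, for a letter `a` whose predecessors have maximum `m`, the number of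
later letters below `a` if `a` is a left-to-right maximum (`m < a`), and otherwise the number
of later letters strictly between `a` and `m`: its sum is `mix π` and its descents are the
positions counted by `das π`. In either code the first entry determines the first letter among
the letters of the word, so both codes are bijections from `S_n` onto the Lehmer codes, and
each pair of statistics is distributed on `S_n` like `(des, sum)` on the Lehmer codes.
-/

open Finset

theorem countP_lt_countP_of_mem {α : Type*} {p q : α → Prop} [DecidablePred p] [DecidablePred q]
    {l : List α} {a : α} (hpq : ∀ x ∈ l, p x → q x) (ha : a ∈ l) (hqa : q a) (hpa : ¬ p a) :
    l.countP (fun x => decide (p x)) < l.countP (fun x => decide (q x)) := by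
  induction l with
  | nil => simp at ha
  | cons x xs ih =>
    have hpq' : ∀ y ∈ xs, p y → q y := fun y hy => hpq y (List.mem_cons_of_mem x hy)
    have hle := List.countP_mono_left (l := xs) (p := fun x => decide (p x))
      (q := fun x => decide (q x)) fun y hy => by simpa using hpq' y hy
    have hx := hpq x List.mem_cons_self
    rw [List.countP_cons, List.countP_cons]
    rcases List.mem_cons.1 ha with rfl | ha
    · simp [hqa, hpa]; omega
    · have := ih hpq' ha
      split_ifs <;> simp_all

theorem sum_eq_sum_range_getD {M : Type*} [AddCommMonoid M] (l : List M) :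
    l.sum = ∑ i ∈ range l.length, l.getD i 0 := by
  induction l with
  | nil => simp
  | cons x xs ih => rw [List.length_cons, sum_range_succ', List.sum_cons, ih]; simp [add_comm]

theorem countP_drop_eq_sum {α : Type*} (w : List α) (d : α) (p : α → Prop) [DecidablePred p]
    (i : ℕ) : (w.drop i).countP (fun y => decide (p y)) =
      ∑ j ∈ range w.length, if i ≤ j ∧ p (w.getD j d) then 1 else 0 := by
  induction w generalizing i with
  | nil => simp
  | cons x xs ih =>
    rw [List.length_cons, sum_range_succ']
    cases i with
    | zero => simpa [List.countP_cons] using ih 0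
    | succ i => simp [ih]

theorem getD_ne_getD_of_nodup {α : Type*} {w : List α} (hw : w.Nodup) (d : α) {i j : ℕ}
    (hi : i < w.length) (hj : j < w.length) (hij : i ≠ j) : w.getD i d ≠ w.getD j d := by
  rw [List.getD_eq_getElem _ _ hi, List.getD_eq_getElem _ _ hj]
  exact fun h => hij (hw.getElem_inj_iff.1 h)

theorem drop_eq_getD_cons {α : Type*} {w : List α} (d : α) {i : ℕ} (hi : i < w.length) :
    w.drop i = w.getD i d :: w.drop (i + 1) := by
  rw [List.drop_eq_getElem_cons hi, List.getD_eq_getElem _ _ hi]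

def lehmerCode : List ℕ → List ℕ
  | [] => []
  | x :: xs => xs.countP (· < x) :: lehmerCode xs

/-- All Lehmer codes of length `n`: words `c` with `c i < n - i`. -/
def lehmerCodes : ℕ → Finset (List ℕ)
  | 0 => {[]}
  | n + 1 => (range (n + 1) ×ˢ lehmerCodes n).image fun p => p.1 :: p.2

theorem cons_mem_lehmerCodes_succ {n x : ℕ} {c : List ℕ} :
    x :: c ∈ lehmerCodes (n + 1) ↔ x ≤ n ∧ c ∈ lehmerCodes n := by
  simp [lehmerCodes]

theorem card_lehmerCodes (n : ℕ) : #(lehmerCodes n) = n.factorial := by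
  induction n with
  | zero => rfl
  | succ n ih =>
    rw [lehmerCodes, card_image_of_injective, card_product, card_range, ih, Nat.factorial_succ]
    rintro ⟨x, c⟩ ⟨y, d⟩ h
    simp_all

theorem lehmerCode_mem_lehmerCodes (w : List ℕ) : lehmerCode w ∈ lehmerCodes w.length := by
  induction w with
  | nil => simp [lehmerCode, lehmerCodes]
  | cons x xs ih => exact cons_mem_lehmerCodes_succ.2 ⟨List.countP_le_length, ih⟩

theorem lehmerCode_getD (w : List ℕ) {i : ℕ} (hi : i < w.length) :
    (lehmerCode w).getD i 0 = (w.drop (i + 1)).countP (· < w.getD i 0) := by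
  induction w generalizing i with
  | nil => simp at hi
  | cons x xs ih =>
    cases i with
    | zero => simp [lehmerCode]
    | succ i => simpa [lehmerCode] using ih (by simpa using hi)

theorem length_lehmerCode (w : List ℕ) : (lehmerCode w).length = w.length := by
  induction w <;> simp [lehmerCode, *]

theorem inv_eq_sum_lehmerCode (w : List ℕ) : inv w = (lehmerCode w).sum := by
  rw [inv, card_filter, sum_product, sum_eq_sum_range_getD, length_lehmerCode]
  refine sum_congr rfl fun i hi => ?_
  rw [lehmerCode_getD w (mem_range.1 hi), countP_drop_eq_sum]
  rfl

theorem countP_lt_lt_countP_lt_cons_iff (a b : ℕ) (S : List ℕ) :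
    S.countP (· < b) < (b :: S).countP (· < a) ↔ b < a := by
  rw [List.countP_cons]
  by_cases hba : b < a
  · have : S.countP (· < b) ≤ S.countP (· < a) :=
      List.countP_mono_left fun y _ => by simp only [decide_eq_true_eq]; omega
    simp [hba]
    omega
  · have : S.countP (· < a) ≤ S.countP (· < b) :=
      List.countP_mono_left fun y _ => by simp only [decide_eq_true_eq]; omega
    simp [hba]
    omega

theorem des_lehmerCode (w : List ℕ) : des (lehmerCode w) = des w := by
  unfold des
  rw [length_lehmerCode]
  congr 1
  refine filter_congr fun i hi => ?_
  have hi1 : i + 1 < w.length := by rw [mem_range] at hi; omega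
  rw [lehmerCode_getD w hi1, lehmerCode_getD w (by omega), drop_eq_getD_cons 0 hi1]
  exact countP_lt_lt_countP_lt_cons_iff _ _ _

theorem eq_of_countP_lt_eq {α : Type*} [LinearOrder α] {l : List α} {a b : α} (ha : a ∈ l)
    (hb : b ∈ l) (h : l.countP (· < a) = l.countP (· < b)) : a = b := by
  have key : ∀ {x y}, x ∈ l → x < y → l.countP (· < x) < l.countP (· < y) := fun hx hxy =>
    countP_lt_countP_of_mem (p := (· < _)) (fun _ _ hz => hz.trans hxy) hx hxy (lt_irrefl _)
  rcases lt_trichotomy a b with hab | rfl | hab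
  · exact absurd h (key ha hab).ne
  · rfl
  · exact absurd h (key hb hab).ne'

theorem lehmerCode_injective_of_perm :
    ∀ {v w : List ℕ}, v.Perm w → lehmerCode v = lehmerCode w → v = w
  | [], _, hp, _ => hp.nil_eq
  | _ :: _, [], hp, _ => hp.eq_nil
  | x :: v, y :: w, hp, h => by
    simp only [lehmerCode, List.cons.injEq] at h
    obtain rfl : x = y := by
      refine eq_of_countP_lt_eq List.mem_cons_self (hp.symm.subset List.mem_cons_self) ?_
      rw [hp.countP_eq fun z => decide (z < y)]
      simpa using h.1
    rw [lehmerCode_injective_of_perm ((List.perm_cons x).1 hp) h.2]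

/-- The entry of the code of `mix` for a letter `a` followed by the letters `l`, where `m` is the
largest letter before `a` (`0` if there is none), so that `a` is a left-to-right maximum iff
`m < a`. -/
def mixEntry (m a : ℕ) (l : List ℕ) : ℕ :=
  l.countP fun y => (y < a ∧ m < a) ∨ (a < y ∧ y < m)

def mixCode : ℕ → List ℕ → List ℕ
  | _, [] => []
  | m, x :: xs => mixEntry m x xs :: mixCode (max m x) xs

theorem mixEntry_of_lt {m a : ℕ} (l : List ℕ) (h : m < a) :
    mixEntry m a l = l.countP (· < a) :=
  List.countP_congr fun y _ => by simp only [decide_eq_true_eq]; omega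

theorem mixEntry_of_le {m a : ℕ} (l : List ℕ) (h : a ≤ m) :
    mixEntry m a l = l.countP fun y => a < y ∧ y < m :=
  List.countP_congr fun y _ => by simp only [decide_eq_true_eq]; omega

theorem mixEntry_cons_self (m a : ℕ) (l : List ℕ) :
    mixEntry m a (a :: l) = mixEntry m a l := by
  simp [mixEntry]

theorem mixEntry_perm (m a : ℕ) {l l' : List ℕ} (hp : l.Perm l') :
    mixEntry m a l = mixEntry m a l' :=
  hp.countP_eq _

theorem mixEntry_max_lt_mixEntry_cons_iff {m a b : ℕ} (S : List ℕ) (hab : a ≠ b) (hma : m ≠ a)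
    (hmb : m ≠ b) :
    mixEntry (max m a) b S < mixEntry m a (b :: S) ↔ (b < a ∧ m < a) ∨ (a < b ∧ b < m) := by
  have mono : ∀ {p q : ℕ → Prop} [DecidablePred p] [DecidablePred q], (∀ y, p y → q y) →
      S.countP (fun y => decide (p y)) ≤ S.countP (fun y => decide (q y)) := fun hpq =>
    List.countP_mono_left fun y _ hy => by simpa using hpq y (by simpa using hy)
  rcases lt_or_gt_of_ne hma with hma | hma
  · rw [max_eq_right hma.le, mixEntry_of_lt _ hma, List.countP_cons]
    rcases lt_or_gt_of_ne hab with hab | hab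
    · have := mono (p := (· < a)) (q := (· < b)) fun y _ => by omega
      rw [mixEntry_of_lt _ hab]
      simp only [decide_eq_true_eq]
      split_ifs <;> omega
    · have := mono (p := fun y => b < y ∧ y < a) (q := (· < a)) fun y _ => by omega
      rw [mixEntry_of_le _ hab.le]
      simp only [decide_eq_true_eq]
      split_ifs <;> omega
  · rw [max_eq_left hma.le, mixEntry_of_le _ hma.le, List.countP_cons]
    rcases lt_or_gt_of_ne hmb with hmb | hmb
    · have := mono (p := fun y => a < y ∧ y < m) (q := (· < b)) fun y _ => by omega
      rw [mixEntry_of_lt _ hmb]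
      simp only [decide_eq_true_eq]
      split_ifs <;> omega
    · rw [mixEntry_of_le _ hmb.le]
      rcases lt_or_gt_of_ne hab with hab | hab
      · have := mono (p := fun y => b < y ∧ y < m) (q := fun y => a < y ∧ y < m) fun y _ => by
          omega
        simp only [decide_eq_true_eq]
        split_ifs <;> omega
      · have := mono (p := fun y => a < y ∧ y < m) (q := fun y => b < y ∧ y < m) fun y _ => by
          omega
        simp only [decide_eq_true_eq]
        split_ifs <;> omega

theorem mixEntry_ne_of_lt {m a b : ℕ} {l : List ℕ} (hm : m ∉ l) (ha : a ∈ l) (hb : b ∈ l)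
    (hab : a < b) : mixEntry m a l ≠ mixEntry m b l := by
  have hma : m ≠ a := fun h => hm (h ▸ ha)
  have hmb : m ≠ b := fun h => hm (h ▸ hb)
  rcases lt_or_gt_of_ne hma with hma | hma
  · rw [mixEntry_of_lt _ hma, mixEntry_of_lt _ (hma.trans hab)]
    exact (countP_lt_countP_of_mem (p := (· < a)) (fun y _ => by omega) ha hab (lt_irrefl a)).ne
  rcases lt_or_gt_of_ne hmb with hmb | hmb
  · rw [mixEntry_of_le _ hma.le, mixEntry_of_lt _ hmb]
    refine (?_ : _ < _).ne
    calc l.countP (fun y => a < y ∧ y < m) < l.countP (· < m) :=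
          countP_lt_countP_of_mem (fun y _ => by omega) ha hma (by omega)
      _ ≤ l.countP (· < b) :=
          List.countP_mono_left fun y _ => by simp only [decide_eq_true_eq]; omega
  · rw [mixEntry_of_le _ hma.le, mixEntry_of_le _ hmb.le]
    exact (countP_lt_countP_of_mem (p := fun y => b < y ∧ y < m) (fun y _ => by omega) hb
      ⟨hab, hmb⟩ fun h => lt_irrefl b h.1).ne'

theorem eq_of_mixEntry_eq {m a b : ℕ} {l : List ℕ} (hm : m ∉ l) (ha : a ∈ l) (hb : b ∈ l)
    (h : mixEntry m a l = mixEntry m b l) : a = b := by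
  rcases lt_trichotomy a b with hab | rfl | hab
  · exact absurd h (mixEntry_ne_of_lt hm ha hb hab)
  · rfl
  · exact absurd h.symm (mixEntry_ne_of_lt hm hb ha hab)

theorem mixCode_injective_of_perm :
    ∀ {m : ℕ} {v w : List ℕ}, v.Nodup → m ∉ v → v.Perm w → mixCode m v = mixCode m w → v = w
  | _, [], _, _, _, hp, _ => hp.nil_eq
  | _, _ :: _, [], _, _, hp, _ => hp.eq_nil
  | m, x :: v, y :: w, hv, hm, hp, h => by
    simp only [mixCode, List.cons.injEq] at h
    obtain rfl : x = y := by
      refine eq_of_mixEntry_eq hm List.mem_cons_self (hp.symm.subset List.mem_cons_self) ?_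
      rw [mixEntry_cons_self, h.1, ← mixEntry_cons_self m y, mixEntry_perm m y hp]
    obtain ⟨hxv, hv⟩ := List.nodup_cons.1 hv
    have hmax : max m x ∉ v := by
      rcases max_choice m x with h' | h' <;> rw [h']
      exacts [fun h => hm (List.mem_cons_of_mem x h), hxv]
    rw [mixCode_injective_of_perm hv hmax ((List.perm_cons x).1 hp) h.2]

theorem length_mixCode (m : ℕ) (w : List ℕ) : (mixCode m w).length = w.length := by
  induction w generalizing m <;> simp [mixCode, *]

theorem mixCode_mem_lehmerCodes (m : ℕ) (w : List ℕ) :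
    mixCode m w ∈ lehmerCodes w.length := by
  induction w generalizing m with
  | nil => simp [mixCode, lehmerCodes]
  | cons x xs ih => exact cons_mem_lehmerCodes_succ.2 ⟨List.countP_le_length, ih _⟩

theorem foldl_max_lt_iff {α : Type*} [LinearOrder α] {l : List α} {m c : α} :
    l.foldl max m < c ↔ m < c ∧ ∀ x ∈ l, x < c := by
  induction l generalizing m with
  | nil => simp
  | cons x xs ih => simp [ih, and_assoc]

theorem lt_foldl_max_iff {α : Type*} [LinearOrder α] {l : List α} {m c : α} :
    c < l.foldl max m ↔ c < m ∨ ∃ x ∈ l, c < x := by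
  induction l generalizing m with
  | nil => simp
  | cons x xs ih => simp [ih, or_assoc]

theorem foldl_max_mem {α : Type*} [LinearOrder α] (l : List α) (m : α) : l.foldl max m ∈ m :: l :=
  List.max_mem (l := m :: l) (List.cons_ne_nil _ _)

theorem foldl_max_take_succ {α : Type*} [LinearOrder α] (w : List α) (m d : α) {i : ℕ}
    (hi : i < w.length) :
    (w.take (i + 1)).foldl max m = max ((w.take i).foldl max m) (w.getD i d) := by
  rw [List.take_add_one, List.getElem?_eq_getElem hi, List.getD_eq_getElem _ _ hi,
    Option.toList_some, List.foldl_append, List.foldl_cons, List.foldl_nil]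

theorem mixCode_getD (m : ℕ) (w : List ℕ) {i : ℕ} (hi : i < w.length) :
    (mixCode m w).getD i 0 = mixEntry ((w.take i).foldl max m) (w.getD i 0) (w.drop (i + 1)) := by
  induction w generalizing i m with
  | nil => simp at hi
  | cons x xs ih =>
    cases i with
    | zero => simp [mixCode]
    | succ i => simpa [mixCode] using ih (max m x) (by simpa using hi)

theorem mem_take_iff_exists_getD {α : Type*} {w : List α} (d : α) {i : ℕ} {x : α}
    (hi : i ≤ w.length) : x ∈ w.take i ↔ ∃ k < i, w.getD k d = x := by
  rw [List.mem_take_iff_getElem]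
  constructor
  · rintro ⟨k, hk, rfl⟩
    exact ⟨k, by omega, List.getD_eq_getElem _ _ _⟩
  · rintro ⟨k, hk, rfl⟩
    exact ⟨k, by omega, (List.getD_eq_getElem _ _ _).symm⟩

theorem isLRMax_iff_foldl_max_lt {w : List ℕ} (h0 : 0 ∉ w) {i : ℕ} (hi : i < w.length) :
    IsLRMax w i ↔ (w.take i).foldl max 0 < w.getD i 0 := by
  have hpos : 0 < w.getD i 0 := by
    rw [List.getD_eq_getElem _ _ hi]
    exact Nat.pos_of_ne_zero fun h => h0 (h ▸ List.getElem_mem hi)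
  simp only [IsLRMax, foldl_max_lt_iff, hpos, true_and, mem_take_iff_exists_getD 0 hi.le]
  grind

theorem exists_lt_getD_iff_lt_foldl_max {w : List ℕ} {i : ℕ} (hi : i ≤ w.length) (c : ℕ) :
    (∃ k ∈ range i, c < w.getD k 0) ↔ c < (w.take i).foldl max 0 := by
  simp only [lt_foldl_max_iff, mem_range, mem_take_iff_exists_getD 0 hi]
  grind

theorem foldl_max_take_ne_getD {w : List ℕ} (hw : w.Nodup) (h0 : 0 ∉ w) {i j : ℕ} (hij : i ≤ j)
    (hj : j < w.length) : (w.take i).foldl max 0 ≠ w.getD j 0 := by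
  rcases List.mem_cons.1 (foldl_max_mem (w.take i) 0) with h | h
  · rw [h, List.getD_eq_getElem _ _ hj]
    exact fun h => h0 (h ▸ List.getElem_mem hj)
  · obtain ⟨k, hk, hkM⟩ := (mem_take_iff_exists_getD 0 (by omega)).1 h
    rw [← hkM]
    exact getD_ne_getD_of_nodup hw 0 (by omega) hj (by omega)

theorem mix_eq_sum_mixCode {w : List ℕ} (h0 : 0 ∉ w) : mix w = (mixCode 0 w).sum := by
  rw [mix, card_filter, sum_product, sum_eq_sum_range_getD, length_mixCode]
  refine sum_congr rfl fun i hi => ?_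
  rw [mem_range] at hi
  rw [mixCode_getD 0 w hi, mixEntry, countP_drop_eq_sum]
  refine sum_congr rfl fun j _ => ?_
  simp only [isLRMax_iff_foldl_max_lt h0 hi, exists_lt_getD_iff_lt_foldl_max hi.le]
  rfl

theorem des_mixCode {w : List ℕ} (hw : w.Nodup) (h0 : 0 ∉ w) : des (mixCode 0 w) = das w := by
  unfold des das
  rw [length_mixCode]
  congr 1
  refine filter_congr fun i hi => ?_
  have hi1 : i + 1 < w.length := by rw [mem_range] at hi; omega
  have hi0 : i < w.length := by omega
  rw [mixCode_getD 0 w hi1, mixCode_getD 0 w hi0, foldl_max_take_succ w 0 0 hi0,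
    drop_eq_getD_cons 0 hi1, isLRMax_iff_foldl_max_lt h0 hi0,
    exists_lt_getD_iff_lt_foldl_max hi0.le]
  exact mixEntry_max_lt_mixEntry_cons_iff _ (getD_ne_getD_of_nodup hw 0 hi0 hi1 (by omega))
    (foldl_max_take_ne_getD hw h0 le_rfl hi0) (foldl_max_take_ne_getD hw h0 (by omega) hi1)

theorem card_filter_comp_of_injective {α β : Type*} [Fintype α] [DecidableEq β] {s : Finset β}
    {F : α → β} (hF : Function.Injective F) (hs : ∀ a, F a ∈ s) (hcard : #s ≤ Fintype.card α)
    (P : β → Prop) [DecidablePred P] : #{a | P (F a)} = #{b ∈ s | P b} := by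
  have himage : univ.image F = s :=
    eq_of_subset_of_card_le (fun b hb => by obtain ⟨a, -, rfl⟩ := mem_image.1 hb; exact hs a)
      (by rwa [card_image_of_injective _ hF, card_univ])
  rw [← himage, filter_image, card_image_of_injective _ hF]

theorem length_permList {n : ℕ} (π : Equiv.Perm (Fin n)) : (permList π).length = n :=
  List.length_ofFn

theorem nodup_permList {n : ℕ} (π : Equiv.Perm (Fin n)) : (permList π).Nodup :=
  List.nodup_ofFn.2 fun _ _ h => π.injective (Fin.val_injective (Nat.succ_injective h))

theorem zero_notMem_permList {n : ℕ} (π : Equiv.Perm (Fin n)) : 0 ∉ permList π := by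
  simp [permList]

theorem permList_perm {n : ℕ} (π σ : Equiv.Perm (Fin n)) : (permList π).Perm (permList σ) :=
  (π.ofFn_comp_perm fun i => (i : ℕ) + 1).trans (σ.ofFn_comp_perm _).symm

theorem permList_injective (n : ℕ) : Function.Injective (permList (n := n)) := fun _ _ h =>
  Equiv.ext fun i => Fin.val_injective (Nat.succ_injective (congrFun (List.ofFn_injective h) i))

theorem card_filter_mixCode_permList (n : ℕ) (P : List ℕ → Prop) [DecidablePred P] :
    #{π : Equiv.Perm (Fin n) | P (mixCode 0 (permList π))} = #{c ∈ lehmerCodes n | P c} :=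
  card_filter_comp_of_injective
    (fun π σ h => permList_injective n <| mixCode_injective_of_perm (nodup_permList π)
      (zero_notMem_permList π) (permList_perm π σ) h)
    (fun π => by simpa only [length_permList] using mixCode_mem_lehmerCodes 0 (permList π))
    (by rw [card_lehmerCodes, Fintype.card_perm, Fintype.card_fin]) P

theorem card_filter_lehmerCode_permList (n : ℕ) (P : List ℕ → Prop) [DecidablePred P] :
    #{π : Equiv.Perm (Fin n) | P (lehmerCode (permList π))} = #{c ∈ lehmerCodes n | P c} :=
  card_filter_comp_of_injective
    (fun π σ h => permList_injective n <| lehmerCode_injective_of_perm (permList_perm π σ) h)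
    (fun π => by simpa only [length_permList] using lehmerCode_mem_lehmerCodes (permList π))
    (by rw [card_lehmerCodes, Fintype.card_perm, Fintype.card_fin]) P

/-- `(das, mix)` is equidistributed with `(des, inv)` on `S_n`. -/
theorem das_mix_equidistributed_des_inv (n a b : ℕ) :
    Nat.card {π : Equiv.Perm (Fin n) // das (permList π) = a ∧ mix (permList π) = b} =
    Nat.card {π : Equiv.Perm (Fin n) // des (permList π) = a ∧ inv (permList π) = b} := by
  classical
  let P : List ℕ → Prop := fun c => des c = a ∧ c.sum = b
  have hmix (π : Equiv.Perm (Fin n)) :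
      das (permList π) = a ∧ mix (permList π) = b ↔ P (mixCode 0 (permList π)) := by
    simp only [P, des_mixCode (nodup_permList π) (zero_notMem_permList π),
      mix_eq_sum_mixCode (zero_notMem_permList π)]
  have hinv (π : Equiv.Perm (Fin n)) :
      des (permList π) = a ∧ inv (permList π) = b ↔ P (lehmerCode (permList π)) := by
    simp only [P, des_lehmerCode, inv_eq_sum_lehmerCode]
  simp only [Nat.card_eq_fintype_card, Fintype.card_subtype, hmix, hinv]
  exact (card_filter_mixCode_permList n P).trans (card_filter_lehmerCode_permList n P).symm

end PaperStats
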